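/- arXiv:2604.23365 — 4 statements merged into one kernel-verified Lean document; each statement's English description precedes it below -/
import Mathlib

section
/- Let H1 be an r-uniform hypergraph (r ≥ 2) on n vertices, and let H be obtained from H1 by attaching at each vertex i one pendant hyperedge consisting of i together with r−1 new vertices (all new vertices distinct). If (λ, x) is an eigenpair of the adjacency hypermatrix A(H1) and μ ∈ ℂ satisfies μ^r − λ μ^{r−1} − 1 = 0, then μ is an eigenvalue of A(H); an eigenvector is given by assigning x_i to each original vertex i and x_i/μ to each of the r−1 new vertices of the pendant hyperedge at i. -/
open Finset
open scoped Classical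

/-- The adjacency hypermatrix entry of an `r`-uniform hypergraph with hyperedge set `E`:
the `(j, f 0, …, f (r-2))`-entry is `1/(r-1)!` when the indices are pairwise distinct and
form a hyperedge, and `0` otherwise. -/
noncomputable def adjEntry (r : ℕ) {V : Type*} [Fintype V] [DecidableEq V]
    (E : Finset (Finset V)) (j : V) (f : Fin (r - 1) → V) : ℂ :=
  if Function.Injective f ∧ (∀ i, f i ≠ j) ∧ insert j (Finset.image f Finset.univ) ∈ E then
    1 / ((r - 1).factorial : ℂ)
  else 0

/-- The degree of a vertex: the number of hyperedges containing it. -/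
def hdegree {V : Type*} [DecidableEq V] (E : Finset (Finset V)) (v : V) : ℕ :=
  (E.filter fun e => v ∈ e).card

/-- The Laplacian hypermatrix entry `L = D - A`. -/
noncomputable def lapEntry (r : ℕ) {V : Type*} [Fintype V] [DecidableEq V]
    (E : Finset (Finset V)) (j : V) (f : Fin (r - 1) → V) : ℂ :=
  (if ∀ i, f i = j then (hdegree E j : ℂ) else 0) - adjEntry r E j f

/-- The signless Laplacian hypermatrix entry `Q = D + A`. -/
noncomputable def signlessEntry (r : ℕ) {V : Type*} [Fintype V] [DecidableEq V]
    (E : Finset (Finset V)) (j : V) (f : Fin (r - 1) → V) : ℂ :=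
  (if ∀ i, f i = j then (hdegree E j : ℂ) else 0) + adjEntry r E j f

/-- `(lam, x)` is an eigenpair of the order-`r` hypermatrix `T` (represented by its
first index and the remaining `r-1` indices). -/
def IsEigenpair {V : Type*} [Fintype V] (r : ℕ)
    (T : V → (Fin (r - 1) → V) → ℂ) (lam : ℂ) (x : V → ℂ) : Prop :=
  x ≠ 0 ∧ ∀ j, ∑ f : Fin (r - 1) → V, T j f * ∏ i, x (f i) = lam * x j ^ (r - 1)

/-- A vector is non-main if the sum over all `(r-1)`-subsets `S` of the vertex set of
`∏_{i ∈ S} x i` vanishes. -/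
def IsNonMainVec {V : Type*} [Fintype V] [DecidableEq V] (r : ℕ) (x : V → ℂ) : Prop :=
  ∑ S ∈ Finset.univ.powersetCard (r - 1), ∏ i ∈ S, x i = 0

/-- An eigenvalue is non-main if it has some non-main eigenvector. -/
def IsNonMainEigenvalue {V : Type*} [Fintype V] [DecidableEq V] (r : ℕ)
    (T : V → (Fin (r - 1) → V) → ℂ) (lam : ℂ) : Prop :=
  ∃ x, IsEigenpair r T lam x ∧ IsNonMainVec r x

/-- The hypergraph obtained from `H₁` (on `Fin n`) by attaching at each vertex `i` one
pendant hyperedge consisting of `i` together with `r - 1` new vertices `(i, j)`. -/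
def pendant1Edges (r n : ℕ) (E : Finset (Finset (Fin n))) :
    Finset (Finset (Fin n ⊕ Fin n × Fin (r - 1))) :=
  E.image (fun e => e.map ⟨Sum.inl, Sum.inl_injective⟩) ∪
  Finset.univ.image (fun i : Fin n =>
    insert (Sum.inl i) (Finset.univ.image fun j : Fin (r - 1) => Sum.inr (i, j)))

lemma image_eq_of_inj {V : Type*} [Fintype V] [DecidableEq V] {m : ℕ} {f : Fin m → V}
    {s : Finset V} (hinj : Function.Injective f) (hmem : ∀ i, f i ∈ s) (hs : s.card = m) :
    Finset.image f Finset.univ = s := by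
  apply Finset.eq_of_subset_of_card_le
  · intro w hw
    obtain ⟨i, _, rfl⟩ := Finset.mem_image.mp hw
    exact hmem i
  · rw [Finset.card_image_of_injective _ hinj, Finset.card_univ, Fintype.card_fin, hs]

lemma card_inj_maps {V : Type*} [Fintype V] [DecidableEq V] (m : ℕ) (s : Finset V)
    (hs : s.card = m) :
    (Finset.univ.filter
      (fun f : Fin m → V => Function.Injective f ∧ ∀ i, f i ∈ s)).card = m.factorial := by
  classical
  rw [← Fintype.card_subtype]
  have e : {f : Fin m → V // Function.Injective f ∧ ∀ i, f i ∈ s} ≃ (Fin m ↪ {a // a ∈ s}) :=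
    { toFun := fun f => ⟨fun i => ⟨f.1 i, f.2.2 i⟩, fun a b h => f.2.1 (congrArg Subtype.val h)⟩
      invFun := fun g => ⟨fun i => (g i).1,
        ⟨fun a b h => g.injective (Subtype.ext h), fun i => (g i).2⟩⟩
      left_inv := fun f => rfl
      right_inv := fun g => rfl }
  rw [Fintype.card_congr e, Fintype.card_embedding_eq]
  simp [Fintype.card_coe, hs, Nat.descFactorial_self, Fintype.card_fin]

lemma sum_adj {V : Type*} [Fintype V] [DecidableEq V] (r : ℕ) (hr : 2 ≤ r)
    (E : Finset (Finset V)) (hu : ∀ e ∈ E, e.card = r) (x : V → ℂ) (j : V) :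
    ∑ f : Fin (r - 1) → V, adjEntry r E j f * ∏ i, x (f i)
      = ∑ e ∈ E.filter (fun e => j ∈ e), ∏ i ∈ e.erase j, x i := by
  classical
  have hsum : ∑ f : Fin (r-1) → V, adjEntry r E j f * ∏ i, x (f i)
      = ∑ f ∈ Finset.univ.filter (fun f : Fin (r-1) → V =>
          Function.Injective f ∧ (∀ i, f i ≠ j) ∧ insert j (Finset.image f Finset.univ) ∈ E),
          (1/((r-1).factorial : ℂ)) * ∏ i, x (f i) := by
    rw [Finset.sum_filter]
    apply Finset.sum_congr rfl
    intro f _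
    unfold adjEntry
    split <;> simp
  rw [hsum]
  have hmaps : ∀ f ∈ Finset.univ.filter (fun f : Fin (r-1) → V =>
      Function.Injective f ∧ (∀ i, f i ≠ j) ∧ insert j (Finset.image f Finset.univ) ∈ E),
      insert j (Finset.image f Finset.univ) ∈ E.filter (fun e => j ∈ e) := by
    intro f hf
    simp only [Finset.mem_filter, Finset.mem_univ, true_and] at hf ⊢
    exact ⟨hf.2.2, Finset.mem_insert_self _ _⟩
  rw [← Finset.sum_fiberwise_of_maps_to hmaps]
  apply Finset.sum_congr rfl
  intro e he
  simp only [Finset.mem_filter] at he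
  obtain ⟨heE, hje⟩ := he
  have hcard : e.card = r := hu e heE
  have hec : (e.erase j).card = r - 1 := by
    rw [Finset.card_erase_of_mem hje, hcard]
  have hset : Finset.filter (fun f => insert j (Finset.image f Finset.univ) = e)
      (Finset.univ.filter (fun f : Fin (r-1) → V =>
        Function.Injective f ∧ (∀ i, f i ≠ j) ∧ insert j (Finset.image f Finset.univ) ∈ E))
      = Finset.univ.filter
        (fun f : Fin (r-1) → V => Function.Injective f ∧ ∀ i, f i ∈ e.erase j) := by
    ext f
    simp only [Finset.mem_filter, Finset.mem_univ, true_and]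
    constructor
    · rintro ⟨⟨hinj, hne, _⟩, heq⟩
      refine ⟨hinj, fun i => Finset.mem_erase.mpr ⟨hne i, ?_⟩⟩
      exact heq ▸ Finset.mem_insert_of_mem (Finset.mem_image_of_mem f (Finset.mem_univ i))
    · rintro ⟨hinj, hmem⟩
      have himg := image_eq_of_inj hinj hmem hec
      have hne : ∀ i, f i ≠ j := fun i => Finset.ne_of_mem_erase (hmem i)
      have heq : insert j (Finset.image f Finset.univ) = e := by
        rw [himg, Finset.insert_erase hje]
      exact ⟨⟨hinj, hne, heq ▸ heE⟩, heq⟩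
  rw [hset]
  have hconst : ∀ f ∈ Finset.univ.filter
      (fun f : Fin (r-1) → V => Function.Injective f ∧ ∀ i, f i ∈ e.erase j),
      (1/((r-1).factorial : ℂ)) * ∏ i, x (f i)
        = (1/((r-1).factorial : ℂ)) * ∏ w ∈ e.erase j, x w := by
    intro f hf
    simp only [Finset.mem_filter, Finset.mem_univ, true_and] at hf
    obtain ⟨hinj, hmem⟩ := hf
    rw [← image_eq_of_inj hinj hmem hec, Finset.prod_image (fun a _ b _ h => hinj h)]
  rw [Finset.sum_congr rfl hconst, Finset.sum_const,
    card_inj_maps (r-1) (e.erase j) hec, nsmul_eq_mul]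
  have hfac : ((r-1).factorial : ℂ) ≠ 0 := Nat.cast_ne_zero.mpr (Nat.factorial_ne_zero _)
  field_simp

/-- adjacency eigenvalues of the corona `H₁ ∘ (r-1)K₁`. -/
theorem stmt9 (r n : ℕ) (hr : 2 ≤ r)
    (E : Finset (Finset (Fin n))) (hu : ∀ e ∈ E, e.card = r)
    (lam mu : ℂ) (x : Fin n → ℂ)
    (hx : IsEigenpair r (adjEntry r E) lam x)
    (hmu : mu ^ r - lam * mu ^ (r - 1) - 1 = 0) :
    IsEigenpair r (adjEntry r (pendant1Edges r n E)) mu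
      (Sum.elim x fun p => x p.1 / mu) := by
  classical
  obtain ⟨hx0, hxe⟩ := hx
  have hμ : mu ≠ 0 := by
    rintro rfl
    rw [zero_pow (by omega : r ≠ 0), zero_pow (by omega : r - 1 ≠ 0)] at hmu
    simp at hmu
  have hinr : ∀ i : Fin n, Function.Injective
      (fun j : Fin (r-1) => (Sum.inr (i, j) : Fin n ⊕ Fin n × Fin (r - 1))) := by
    intro i a b h; simpa using h
  have hPcard : ∀ i : Fin n,
      (insert (Sum.inl i) (Finset.univ.image fun j : Fin (r-1) =>
        (Sum.inr (i,j) : Fin n ⊕ Fin n × Fin (r-1)))).card = r := by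
    intro i
    rw [Finset.card_insert_of_notMem (by simp),
      Finset.card_image_of_injective _ (hinr i), Finset.card_univ, Fintype.card_fin]
    omega
  have hu' : ∀ e ∈ pendant1Edges r n E, e.card = r := by
    intro e he
    rw [pendant1Edges, Finset.mem_union] at he
    rcases he with he | he
    · obtain ⟨a, ha, rfl⟩ := Finset.mem_image.mp he
      rw [Finset.card_map]; exact hu a ha
    · obtain ⟨i, _, rfl⟩ := Finset.mem_image.mp he
      exact hPcard i
  constructor
  · intro h
    apply hx0
    funext v
    have := congrFun h (Sum.inl v)
    simpa using this
  intro j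
  rw [sum_adj r hr _ hu']
  cases j with
  | inl v =>
    have hfilter : (pendant1Edges r n E).filter (fun e => Sum.inl v ∈ e)
        = (E.filter (fun e => v ∈ e)).image
            (fun e => e.map ⟨Sum.inl, Sum.inl_injective⟩)
          ∪ {insert (Sum.inl v) (Finset.univ.image fun j : Fin (r-1) =>
              (Sum.inr (v, j) : Fin n ⊕ Fin n × Fin (r-1)))} := by
      ext e
      simp only [pendant1Edges, Finset.mem_filter, Finset.mem_union, Finset.mem_image,
        Finset.mem_singleton, Finset.mem_univ, true_and]
      constructor
      · rintro ⟨h1 | h1, h2⟩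
        · obtain ⟨a, ha, rfl⟩ := h1
          exact Or.inl ⟨a, ⟨ha, by simpa using h2⟩, rfl⟩
        · obtain ⟨i, rfl⟩ := h1
          have hiv : v = i := by simpa using h2
          subst hiv
          exact Or.inr rfl
      · rintro (⟨a, ⟨ha, hva⟩, rfl⟩ | rfl)
        · exact ⟨Or.inl ⟨a, ha, rfl⟩, by simpa using hva⟩
        · exact ⟨Or.inr ⟨v, rfl⟩, Finset.mem_insert_self _ _⟩
    have hdisj : Disjoint
        ((E.filter (fun e => v ∈ e)).image (fun e => e.map ⟨Sum.inl, Sum.inl_injective⟩))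
        {insert (Sum.inl v) (Finset.univ.image fun j : Fin (r-1) =>
          (Sum.inr (v, j) : Fin n ⊕ Fin n × Fin (r-1)))} := by
      rw [Finset.disjoint_singleton_right]
      intro h
      obtain ⟨a, _, ha⟩ := Finset.mem_image.mp h
      have h0 : (Sum.inr (v, ⟨0, by omega⟩) : Fin n ⊕ Fin n × Fin (r-1))
          ∈ a.map ⟨Sum.inl, Sum.inl_injective⟩ := by
        rw [ha]
        exact Finset.mem_insert_of_mem (Finset.mem_image_of_mem _ (Finset.mem_univ _))
      simp [Finset.mem_map] at h0
    rw [hfilter, Finset.sum_union hdisj, Finset.sum_singleton]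
    have hinj_map : ∀ a ∈ E.filter (fun e => v ∈ e), ∀ b ∈ E.filter (fun e => v ∈ e),
        a.map (⟨Sum.inl, Sum.inl_injective⟩ : Fin n ↪ Fin n ⊕ Fin n × Fin (r-1))
          = b.map ⟨Sum.inl, Sum.inl_injective⟩
        → a = b := fun a _ b _ h => Finset.map_injective _ h
    rw [Finset.sum_image hinj_map]
    have hterm : ∀ a ∈ E.filter (fun e => v ∈ e),
        ∏ w ∈ (a.map (⟨Sum.inl, Sum.inl_injective⟩ : Fin n ↪ Fin n ⊕ Fin n × Fin (r-1))).erase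
            (Sum.inl v),
          (Sum.elim x fun p => x p.1 / mu) w
        = ∏ u ∈ a.erase v, x u := by
      intro a _
      rw [show (Sum.inl v : Fin n ⊕ Fin n × Fin (r-1))
          = (⟨Sum.inl, Sum.inl_injective⟩ : Fin n ↪ _) v from rfl,
        ← Finset.map_erase, Finset.prod_map]
      rfl
    rw [Finset.sum_congr rfl hterm, ← sum_adj r hr E hu x v, hxe v]
    have h2 : ∏ w ∈ (insert (Sum.inl v) (Finset.univ.image fun j : Fin (r-1) =>
          (Sum.inr (v, j) : Fin n ⊕ Fin n × Fin (r-1)))).erase (Sum.inl v),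
          (Sum.elim x fun p => x p.1 / mu) w
        = (x v / mu) ^ (r - 1) := by
      rw [Finset.erase_insert (by simp), Finset.prod_image (fun a _ b _ h => (hinr v) h)]
      simp
      rw [div_pow]
    rw [h2]
    have hmu' : mu * mu ^ (r-1) = lam * mu ^ (r-1) + 1 := by
      have hpow : mu ^ r = mu * mu ^ (r-1) := by
        conv_lhs => rw [show r = (r-1)+1 by omega]
        ring
      rw [hpow] at hmu
      linear_combination hmu
    show lam * x v ^ (r-1) + (x v / mu) ^ (r-1) = mu * x v ^ (r-1)
    rw [div_pow]
    have hfac : mu ^ (r-1) ≠ 0 := pow_ne_zero _ hμ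
    field_simp
    linear_combination (-(x v ^ (r-1))) * hmu'
  | inr p =>
    obtain ⟨v, k⟩ := p
    have hfilter : (pendant1Edges r n E).filter (fun e => Sum.inr (v, k) ∈ e)
        = {insert (Sum.inl v) (Finset.univ.image fun j : Fin (r-1) =>
            (Sum.inr (v, j) : Fin n ⊕ Fin n × Fin (r-1)))} := by
      ext e
      simp only [pendant1Edges, Finset.mem_filter, Finset.mem_union, Finset.mem_image,
        Finset.mem_singleton, Finset.mem_univ, true_and]
      constructor
      · rintro ⟨h1 | h1, h2⟩
        · obtain ⟨a, _, rfl⟩ := h1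
          simp [Finset.mem_map] at h2
        · obtain ⟨i, rfl⟩ := h1
          have hiv : i = v := by
            simp only [Finset.mem_insert, Finset.mem_image, Finset.mem_univ, true_and] at h2
            rcases h2 with h | ⟨j, h⟩
            · exact absurd h (by simp)
            · exact congrArg Prod.fst (Sum.inr_injective h)
          subst hiv
          rfl
      · rintro rfl
        exact ⟨Or.inr ⟨v, rfl⟩,
          Finset.mem_insert_of_mem (Finset.mem_image_of_mem _ (Finset.mem_univ k))⟩
    rw [hfilter, Finset.sum_singleton]
    have hne : (Sum.inl v : Fin n ⊕ Fin n × Fin (r-1)) ≠ Sum.inr (v, k) := by simp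
    rw [Finset.erase_insert_of_ne hne, Finset.prod_insert (by simp)]
    have him : (Finset.univ.image fun j : Fin (r-1) =>
          (Sum.inr (v, j) : Fin n ⊕ Fin n × Fin (r-1))).erase (Sum.inr (v, k))
        = (Finset.univ.erase k).image
            (fun j : Fin (r-1) => (Sum.inr (v, j) : Fin n ⊕ Fin n × Fin (r-1))) :=
      (Finset.image_erase (hinr v) Finset.univ k).symm
    rw [him, Finset.prod_image (fun a _ b _ h => (hinr v) h)]
    have h3 : (∏ _j ∈ Finset.univ.erase k, (x v / mu)) = (x v / mu) ^ (r - 2) := by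
      rw [Finset.prod_const, Finset.card_erase_of_mem (Finset.mem_univ k),
        Finset.card_univ, Fintype.card_fin, show r - 1 - 1 = r - 2 by omega]
    show x v * (∏ _j ∈ Finset.univ.erase k, (x v / mu)) = mu * (x v / mu) ^ (r-1)
    rw [h3]
    have hstep : (x v / mu) ^ (r-1) = (x v / mu) * (x v / mu) ^ (r-2) := by
      rw [← pow_succ', show r - 2 + 1 = r - 1 by omega]
    rw [hstep, ← mul_assoc, mul_comm mu, div_mul_cancel₀ _ hμ]
end

section
/- Let H1 be an r-uniform hypergraph (r ≥ 2) on n vertices, and let H be obtained from H1 by attaching at each vertex i one pendant hyperedge consisting of i together with r−1 new vertices (all new vertices distinct). If (θ, w) is an eigenpair of the Laplacian L(H1) and μ ∈ ℂ with μ ≠ 1 satisfies (μ − θ − 1)(1 − μ)^{r−1} + 1 = 0, then μ is an eigenvalue of L(H); an eigenvector is given by assigning w_i to each original vertex i and w_i/(1 − μ) to each of the r−1 new vertices of the pendant hyperedge at i. -/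
open Finset
open scoped Classical

lemma card_inj_image {V : Type*} [Fintype V] [DecidableEq V] (m : ℕ) (S : Finset V)
    (hS : S.card = m) :
    (Finset.univ.filter fun f : Fin m → V => Function.Injective f ∧ Finset.univ.image f = S).card
      = m.factorial := by
  have e : {f : Fin m → V // Function.Injective f ∧ Finset.univ.image f = S} ≃ (Fin m ↪ S) :=
    { toFun := fun f => ⟨fun i => ⟨f.1 i, by have h := Finset.mem_image_of_mem f.1 (Finset.mem_univ i); rwa [f.2.2] at h⟩,
        fun a b h => f.2.1 (by simpa using congrArg Subtype.val h)⟩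
      invFun := fun g => ⟨fun i => (g i : V), by
        constructor
        · intro a b h
          exact g.injective (Subtype.ext h)
        · apply Finset.eq_of_subset_of_card_le
          · intro v hv
            simp only [Finset.mem_image, Finset.mem_univ, true_and] at hv
            obtain ⟨i, rfl⟩ := hv
            exact (g i).2
          · rw [hS, Finset.card_image_of_injective _ (fun a b h => g.injective (Subtype.ext h)),
              Finset.card_univ, Fintype.card_fin]⟩
      left_inv := fun f => by ext i; rfl
      right_inv := fun g => by ext i; rfl }
  rw [← Fintype.card_subtype]
  rw [Fintype.card_congr e, Fintype.card_embedding_eq]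
  simp [hS, Nat.descFactorial_self]

lemma adj_sum (r : ℕ) {V : Type*} [Fintype V] [DecidableEq V] (E : Finset (Finset V))
    (hu : ∀ e ∈ E, e.card = r) (x : V → ℂ) (j : V) :
    ∑ f : Fin (r - 1) → V, adjEntry r E j f * ∏ i, x (f i)
      = ∑ e ∈ E.filter (fun e => j ∈ e), ∏ v ∈ e.erase j, x v := by
  set m := r - 1 with hm
  have step : ∀ f : Fin m → V, adjEntry r E j f * ∏ i, x (f i)
      = ∑ e ∈ E.filter (fun e => j ∈ e),
          (if Function.Injective f ∧ Finset.univ.image f = e.erase j then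
            (1 / (m.factorial : ℂ)) * ∏ i, x (f i) else 0) := by
    intro f
    unfold adjEntry
    by_cases h : Function.Injective f ∧ (∀ i, f i ≠ j) ∧ insert j (Finset.image f Finset.univ) ∈ E
    · obtain ⟨hinj, hne, hmem⟩ := h
      rw [if_pos ⟨hinj, hne, hmem⟩]
      have hjni : j ∉ Finset.univ.image f := by
        simp only [Finset.mem_image, Finset.mem_univ, true_and]
        rintro ⟨i, hi⟩; exact hne i hi
      rw [Finset.sum_eq_single (insert j (Finset.univ.image f))]
      · rw [if_pos ⟨hinj, (Finset.erase_insert hjni).symm⟩]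
      · intro e he hne'
        rw [if_neg]
        rintro ⟨-, him⟩
        apply hne'
        rw [Finset.mem_filter] at he
        rw [← Finset.insert_erase he.2, ← him]
      · intro hnot
        exact absurd (Finset.mem_filter.mpr ⟨hmem, Finset.mem_insert_self j _⟩) hnot
    · rw [if_neg h, zero_mul]
      symm
      apply Finset.sum_eq_zero
      intro e he
      rw [if_neg]
      rintro ⟨hinj, him⟩
      rw [Finset.mem_filter] at he
      apply h
      refine ⟨hinj, ?_, ?_⟩
      · intro i hij
        have : f i ∈ Finset.univ.image f := Finset.mem_image_of_mem _ (Finset.mem_univ i)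
        rw [him] at this
        exact Finset.notMem_erase j e (hij ▸ this)
      · rw [him, Finset.insert_erase he.2]; exact he.1
  rw [Finset.sum_congr rfl fun f _ => step f, Finset.sum_comm]
  refine Finset.sum_congr rfl fun e he => ?_
  rw [Finset.mem_filter] at he
  have hS : (e.erase j).card = m := by
    rw [Finset.card_erase_of_mem he.2, hu e he.1]
  have hconst : ∀ f : Fin m → V,
      (if Function.Injective f ∧ Finset.univ.image f = e.erase j then
        (1 / (m.factorial : ℂ)) * ∏ i, x (f i) else 0)
      = (if Function.Injective f ∧ Finset.univ.image f = e.erase j then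
        (1 / (m.factorial : ℂ)) * ∏ v ∈ e.erase j, x v else 0) := by
    intro f
    by_cases h : Function.Injective f ∧ Finset.univ.image f = e.erase j
    · rw [if_pos h, if_pos h]
      congr 1
      rw [← h.2, Finset.prod_image (fun a _ b _ hab => h.1 hab)]
    · rw [if_neg h, if_neg h]
  rw [Finset.sum_congr rfl fun f _ => hconst f,
    ← Finset.sum_filter (fun f : Fin m → V => Function.Injective f ∧ Finset.univ.image f = e.erase j)
      (fun _ => (1 / (m.factorial : ℂ)) * ∏ v ∈ e.erase j, x v),
    Finset.sum_const, card_inj_image m (e.erase j) hS, nsmul_eq_mul]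
  have hfac : (m.factorial : ℂ) ≠ 0 := Nat.cast_ne_zero.mpr m.factorial_ne_zero
  field_simp


lemma lap_sum (r : ℕ) {V : Type*} [Fintype V] [DecidableEq V] (E : Finset (Finset V))
    (hu : ∀ e ∈ E, e.card = r) (x : V → ℂ) (j : V) :
    ∑ f : Fin (r - 1) → V, lapEntry r E j f * ∏ i, x (f i)
      = (hdegree E j : ℂ) * x j ^ (r - 1)
        - ∑ e ∈ E.filter (fun e => j ∈ e), ∏ v ∈ e.erase j, x v := by
  unfold lapEntry
  simp only [sub_mul]
  rw [Finset.sum_sub_distrib, adj_sum r E hu x j]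
  congr 1
  have key : ∀ f : Fin (r-1) → V,
      (if ∀ i, f i = j then (hdegree E j : ℂ) else 0) * ∏ i, x (f i)
        = if f = (fun _ => j) then (hdegree E j : ℂ) * x j ^ (r - 1) else 0 := by
    intro f
    by_cases h : ∀ i, f i = j
    · have hf : f = fun _ => j := funext h
      rw [if_pos h, if_pos hf, hf]
      simp [Finset.prod_const]
    · rw [if_neg h, if_neg, zero_mul]
      intro hf; exact h fun i => congrFun hf i
  rw [Finset.sum_congr rfl fun f _ => key f, Finset.sum_ite_eq' Finset.univ (fun _ => j)]
  simp


/-- Laplacian eigenvalues of the corona `H₁ ∘ (r-1)K₁`. -/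
theorem stmt10 (r n : ℕ) (hr : 2 ≤ r)
    (E : Finset (Finset (Fin n))) (hu : ∀ e ∈ E, e.card = r)
    (theta mu : ℂ) (w : Fin n → ℂ)
    (hw : IsEigenpair r (lapEntry r E) theta w)
    (hmu1 : mu ≠ 1)
    (hmu : (mu - theta - 1) * (1 - mu) ^ (r - 1) + 1 = 0) :
    IsEigenpair r (lapEntry r (pendant1Edges r n E)) mu
      (Sum.elim w fun p => w p.1 / (1 - mu)) := by
  have hm1 : 1 ≤ r - 1 := by omega
  set m := r - 1 with hmdef
  have h1mu : (1 : ℂ) - mu ≠ 0 := sub_ne_zero_of_ne (Ne.symm hmu1)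
  set x : (Fin n ⊕ Fin n × Fin (r - 1)) → ℂ := Sum.elim w fun p => w p.1 / (1 - mu) with hx
  set P : Fin n → Finset (Fin n ⊕ Fin n × Fin (r - 1)) := fun i =>
    insert (Sum.inl i) (Finset.univ.image fun j : Fin (r - 1) => Sum.inr (i, j)) with hP
  have k0 : Fin (r - 1) := ⟨0, by omega⟩
  have hinr_inj : ∀ i : Fin n, Function.Injective (fun j : Fin (r-1) => (Sum.inr (i, j) : Fin n ⊕ Fin n × Fin (r-1))) := by
    intro i a b hab
    simpa using hab
  have hinl_not : ∀ i i' : Fin n, (Sum.inl i : Fin n ⊕ Fin n × Fin (r-1)) ∉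
      (Finset.univ.image fun j : Fin (r - 1) => Sum.inr (i', j)) := by
    intro i i'
    simp
  have hPcard : ∀ i, (P i).card = r := by
    intro i
    rw [hP]
    rw [Finset.card_insert_of_notMem (hinl_not i i),
      Finset.card_image_of_injective _ (hinr_inj i), Finset.card_univ, Fintype.card_fin]
    omega
  have hu' : ∀ e ∈ pendant1Edges r n E, e.card = r := by
    intro e he
    rw [pendant1Edges, Finset.mem_union] at he
    rcases he with he | he
    · obtain ⟨e', he', rfl⟩ := Finset.mem_image.mp he
      rw [Finset.card_map]; exact hu e' he'
    · obtain ⟨i, -, rfl⟩ := Finset.mem_image.mp he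
      exact hPcard i
  -- P i is never a mapped edge
  have hPnotmap : ∀ (i : Fin n) (e : Finset (Fin n)),
      e.map ⟨Sum.inl, Sum.inl_injective⟩ ≠ P i := by
    intro i e h
    have : (Sum.inr (i, k0) : Fin n ⊕ Fin n × Fin (r-1)) ∈ e.map ⟨Sum.inl, Sum.inl_injective⟩ := by
      rw [h, hP]
      exact Finset.mem_insert_of_mem (Finset.mem_image_of_mem _ (Finset.mem_univ k0))
    simp [Finset.mem_map] at this
  have hfilter_inl : ∀ i : Fin n,
      (pendant1Edges r n E).filter (fun e => Sum.inl i ∈ e)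
        = insert (P i) ((E.filter (fun e => i ∈ e)).image (fun e => e.map ⟨Sum.inl, Sum.inl_injective⟩)) := by
    intro i
    ext a
    simp only [pendant1Edges, Finset.mem_filter, Finset.mem_union, Finset.mem_image,
      Finset.mem_insert, Finset.mem_univ, true_and]
    constructor
    · rintro ⟨h1 | h2, ha⟩
      · right
        obtain ⟨e, he, rfl⟩ := h1
        exact ⟨e, ⟨he, by simpa using ha⟩, rfl⟩
      · left
        obtain ⟨i', rfl⟩ := h2
        have : i' = i := by
          simp only [Finset.mem_insert, Finset.mem_image, Finset.mem_univ, true_and] at ha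
          rcases ha with h | ⟨j, hj⟩
          · exact (Sum.inl.inj h).symm
          · exact absurd hj (by simp)
        rw [this, hP]
    · rintro (rfl | ⟨e, ⟨he, hie⟩, rfl⟩)
      · exact ⟨Or.inr ⟨i, rfl⟩, Finset.mem_insert_self _ _⟩
      · exact ⟨Or.inl ⟨e, he, rfl⟩, by simpa using hie⟩
  have hfilter_inr : ∀ (i : Fin n) (k : Fin (r-1)),
      (pendant1Edges r n E).filter (fun e => Sum.inr (i, k) ∈ e) = {P i} := by
    intro i k
    ext a
    simp only [pendant1Edges, Finset.mem_filter, Finset.mem_union, Finset.mem_image,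
      Finset.mem_singleton, Finset.mem_univ, true_and]
    constructor
    · rintro ⟨h1 | h2, ha⟩
      · obtain ⟨e, he, rfl⟩ := h1
        exact absurd ha (by simp [Finset.mem_map])
      · obtain ⟨i', rfl⟩ := h2
        have : i' = i := by
          simp only [Finset.mem_insert, Finset.mem_image, Finset.mem_univ, true_and] at ha
          rcases ha with h | ⟨j, hj⟩
          · exact absurd h (by simp)
          · exact congrArg Prod.fst (Sum.inr.inj hj)
        rw [this, hP]
    · rintro rfl
      exact ⟨Or.inr ⟨i, rfl⟩,
        Finset.mem_insert_of_mem (Finset.mem_image_of_mem _ (Finset.mem_univ k))⟩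
  have hdeg_inl : ∀ i : Fin n, hdegree (pendant1Edges r n E) (Sum.inl i) = hdegree E i + 1 := by
    intro i
    rw [hdegree, hfilter_inl i, Finset.card_insert_of_notMem (by
      rw [Finset.mem_image]; rintro ⟨e, -, he⟩; exact hPnotmap i e he),
      Finset.card_image_of_injective _ (Finset.map_injective _), hdegree]
  have hdeg_inr : ∀ (i : Fin n) (k : Fin (r-1)),
      hdegree (pendant1Edges r n E) (Sum.inr (i, k)) = 1 := by
    intro i k
    rw [hdegree, hfilter_inr i k, Finset.card_singleton]
  constructor
  · obtain ⟨i, hi⟩ := Function.ne_iff.mp hw.1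
    intro h
    exact hi (by simpa [hx] using congrFun h (Sum.inl i))
  intro j
  rw [lap_sum r (pendant1Edges r n E) hu' x j]
  rcases j with i | ⟨i, k⟩
  · -- original vertex
    have h1 := hw.2 i
    rw [lap_sum r E hu w i] at h1
    rw [hdeg_inl i, hfilter_inl i, Finset.sum_insert (by
      rw [Finset.mem_image]; rintro ⟨e, -, he⟩; exact hPnotmap i e he)]
    have hprodP : ∏ v ∈ (P i).erase (Sum.inl i), x v = (w i / (1 - mu)) ^ m := by
      rw [hP]
      simp only
      rw [Finset.erase_insert (hinl_not i i),
        Finset.prod_image (fun a _ b _ hab => hinr_inj i hab)]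
      simp [hx, Finset.prod_const, Finset.card_univ]
      exact (div_pow _ _ _).symm
    have hprodmap : ∑ e' ∈ (E.filter (fun e => i ∈ e)).image
          (fun e => e.map ⟨Sum.inl, Sum.inl_injective⟩),
        ∏ v ∈ e'.erase (Sum.inl i), x v
        = ∑ e ∈ E.filter (fun e => i ∈ e), ∏ v ∈ e.erase i, w v := by
      rw [Finset.sum_image (fun a _ b _ hab => Finset.map_injective _ hab)]
      refine Finset.sum_congr rfl fun e he => ?_
      rw [show ((Sum.inl i : Fin n ⊕ Fin n × Fin (r-1))) = (⟨Sum.inl, Sum.inl_injective⟩ : Fin n ↪ _) i from rfl,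
        ← Finset.map_erase, Finset.prod_map]
      rfl
    rw [hprodP, hprodmap]
    simp only [Sum.elim_inl, hx]
    push_cast
    rw [div_pow]
    field_simp
    linear_combination ((1 - mu) ^ m) * h1 - (w i ^ m) * hmu
  · -- new pendant vertex
    rw [hdeg_inr i k, hfilter_inr i k, Finset.sum_singleton]
    have hprod : ∏ v ∈ (P i).erase (Sum.inr (i, k)), x v
        = w i * (w i / (1 - mu)) ^ (m - 1) := by
      rw [hP]
      simp only
      rw [Finset.erase_insert_of_ne (by simp),
        Finset.prod_insert (by simp),
        ← Finset.image_erase (hinr_inj i),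
        Finset.prod_image (fun a _ b _ hab => hinr_inj i hab)]
      simp only [hx, Sum.elim_inl, Sum.elim_inr]
      rw [Finset.prod_const, Finset.card_erase_of_mem (Finset.mem_univ k),
        Finset.card_univ, Fintype.card_fin]
    rw [hprod]
    simp only [Sum.elim_inr, hx]
    have hX : (1 - mu) * (w i / (1 - mu)) = w i := mul_div_cancel₀ _ h1mu
    have hpow : (w i / (1 - mu)) ^ (r - 1) = (w i / (1 - mu)) ^ (r - 1 - 1) * (w i / (1 - mu)) := by
      rw [← pow_succ]
      congr 1
      omega
    rw [hpow]
    push_cast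
    linear_combination ((w i / (1 - mu)) ^ (r - 1 - 1)) * hX
end

section
/- Let G be a simple graph on n ≥ 1 vertices and let G1 = G ∘ K_1 be the corona of G with K_1 (a new pendant vertex attached by an edge to each vertex of G). Then every eigenvalue μ of the adjacency matrix of G1 is nonzero, and −1/μ is also an eigenvalue of the adjacency matrix of G1. -/
/-- The adjacency matrix of the corona `G ∘ K₁`: to each vertex `v` of `G` a new pendant
vertex `v'` is attached by an edge.  First summand: original vertices; second summand:
pendant vertices. -/
def coronaAdj (n : ℕ) (G : SimpleGraph (Fin n)) [DecidableRel G.Adj] :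
    Matrix (Fin n ⊕ Fin n) (Fin n ⊕ Fin n) ℝ
  | Sum.inl u, Sum.inl v => if G.Adj u v then 1 else 0
  | Sum.inl u, Sum.inr v => if u = v then 1 else 0
  | Sum.inr u, Sum.inl v => if u = v then 1 else 0
  | Sum.inr _, Sum.inr _ => 0

lemma coronaAdj_eq (n : ℕ) (G : SimpleGraph (Fin n)) [DecidableRel G.Adj] :
    coronaAdj n G =
      Matrix.fromBlocks (Matrix.of fun u v => if G.Adj u v then (1:ℝ) else 0) 1 1 0 := by
  ext (u | u) (v | v) <;>
    simp [coronaAdj, Matrix.fromBlocks, Matrix.one_apply]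

/-- every eigenvalue `μ` of the adjacency matrix of `G ∘ K₁` is nonzero and
`-1/μ` is also an eigenvalue. -/
theorem stmt12 (n : ℕ) (hn : 1 ≤ n) (G : SimpleGraph (Fin n)) [DecidableRel G.Adj]
    (mu : ℝ) (h : ∃ v : Fin n ⊕ Fin n → ℝ, v ≠ 0 ∧ (coronaAdj n G).mulVec v = mu • v) :
    mu ≠ 0 ∧
      ∃ w : Fin n ⊕ Fin n → ℝ, w ≠ 0 ∧ (coronaAdj n G).mulVec w = (-1 / mu) • w := by
  obtain ⟨v, hv0, hv⟩ := h
  set A : Matrix (Fin n) (Fin n) ℝ := Matrix.of fun u v => if G.Adj u v then (1:ℝ) else 0 with hA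
  set x : Fin n → ℝ := fun i => v (Sum.inl i) with hx
  set y : Fin n → ℝ := fun i => v (Sum.inr i) with hy
  have hvxy : v = Sum.elim x y := by
    funext i; cases i <;> rfl
  rw [hvxy, coronaAdj_eq, Matrix.fromBlocks_mulVec] at hv
  have h1 : A.mulVec x + y = mu • x := by
    funext i
    have := congrFun hv (Sum.inl i)
    simpa [Matrix.one_mulVec] using this
  have h2 : x = mu • y := by
    funext i
    have := congrFun hv (Sum.inr i)
    simpa [Matrix.one_mulVec, Matrix.zero_mulVec] using this
  -- mu ≠ 0
  have hmu : mu ≠ 0 := by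
    intro hm
    apply hv0
    have hx0 : x = 0 := by rw [h2, hm, zero_smul]
    have hy0 : y = 0 := by
      have := h1
      rw [hx0, hm] at this
      simpa using this
    rw [hvxy, hx0, hy0]
    funext i; cases i <;> simp
  have hyx : y = mu⁻¹ • x := by
    rw [h2, smul_smul, inv_mul_cancel₀ hmu, one_smul]
  have hxne : x ≠ 0 := by
    intro hx0
    apply hv0
    rw [hvxy, hx0, hyx, hx0, smul_zero]
    funext i; cases i <;> simp
  have hAx : A.mulVec x = (mu - mu⁻¹) • x := by
    have : A.mulVec x = mu • x - y := by
      rw [← h1]; abel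
    rw [this, hyx, sub_smul]
  refine ⟨hmu, Sum.elim x (-mu • x), ?_, ?_⟩
  · intro hw
    apply hxne
    funext i
    exact congrFun hw (Sum.inl i)
  · rw [coronaAdj_eq, Matrix.fromBlocks_mulVec]
    have key : Sum.elim (A.mulVec x + Matrix.mulVec 1 (-mu • x))
        (Matrix.mulVec 1 x + Matrix.mulVec 0 (-mu • x))
        = (-1/mu) • Sum.elim x (-mu • x) := by
      funext i
      cases i
      · simp only [Sum.elim_inl, Matrix.one_mulVec, hAx, Pi.add_apply, Pi.smul_apply,
          smul_eq_mul]
        field_simp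
        ring
      · simp only [Sum.elim_inr, Matrix.one_mulVec, Matrix.zero_mulVec, Pi.add_apply,
          Pi.zero_apply, Pi.smul_apply, smul_eq_mul]
        field_simp
        ring
    exact key
end

section
/- Let H1 be an r-uniform hypergraph (r ≥ 2) of order n1 and H2 a d-regular r-uniform hypergraph of order n2 ≥ r − 1, and let H = H1 ∘ H2 be their r-uniform corona. Write C = binom(n2−1, r−2). (a) If (λ, x) is an eigenpair of the adjacency hypermatrix A(H1) and μ ∈ ℂ with μ ≠ d satisfies (μ − λ)(μ − d)^{r−1} − binom(n2, r−1)·C^{r−1} = 0, then μ is an eigenvalue of A(H); an eigenvector assigns x_i to each vertex u_i of H1 and C·x_i/(μ − d) to every vertex of the i-th copy of H2. (b) If η is a non-main eigenvalue of A(H2), then η is an eigenvalue of A(H): for a non-main eigenvector z of A(H2) for η and any i ∈ {1,…,n1}, the vector equal to z on the i-th copy of H2 and 0 elsewhere is an eigenvector of A(H) for η. -/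
open Finset
open scoped Classical

/-- The `r`-uniform corona `H₁ ∘ H₂`: `H₁` lives on `Fin n₁` (embedded via `Sum.inl`),
the `i`-th copy of `H₂` lives on `{i} × Fin n₂` (embedded via `Sum.inr`), and for each
`i` every `r`-element subset of the `i`-th copy together with `u_i` that contains `u_i`
is added as a hyperedge. -/
noncomputable def coronaEdges (r n₁ n₂ : ℕ) (E₁ : Finset (Finset (Fin n₁)))
    (E₂ : Finset (Finset (Fin n₂))) : Finset (Finset (Fin n₁ ⊕ Fin n₁ × Fin n₂)) :=
  E₁.image (fun e => e.map ⟨Sum.inl, Sum.inl_injective⟩) ∪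
  (Finset.univ ×ˢ E₂).image
    (fun p : Fin n₁ × Finset (Fin n₂) =>
      p.2.image (fun v => Sum.inr (p.1, v))) ∪
  (Finset.univ ×ˢ (Finset.univ.powersetCard (r - 1) : Finset (Finset (Fin n₂)))).image
    (fun p : Fin n₁ × Finset (Fin n₂) =>
      insert (Sum.inl p.1) (p.2.image (fun v => Sum.inr (p.1, v))))

/-! ### Auxiliary lemmas -/

lemma card_fiber {V : Type*} [Fintype V] [DecidableEq V] (k : ℕ) (S : Finset V)
    (hS : S.card = k) :
    (Finset.univ.filter fun f : Fin k → V => Finset.image f Finset.univ = S).card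
      = k.factorial := by
  have hinj : ∀ f : Fin k → V, Finset.image f Finset.univ = S → Function.Injective f := by
    intro f hf
    have h1 : (Finset.univ.image f).card = (Finset.univ : Finset (Fin k)).card := by
      rw [hf, hS, Finset.card_univ, Fintype.card_fin]
    have := Finset.injOn_of_card_image_eq h1
    rw [Finset.coe_univ] at this
    exact fun a b hab => this (Set.mem_univ a) (Set.mem_univ b) hab
  have hcard : Fintype.card (Fin k ↪ {x // x ∈ S}) = k.factorial := by
    rw [Fintype.card_embedding_eq, Fintype.card_fin, Fintype.card_coe, hS,
      Nat.descFactorial_self]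
  rw [← hcard, ← Finset.card_univ]
  refine Finset.card_bij' (fun f hf => ⟨fun a => ⟨f a, ?_⟩, fun a b hab => ?_⟩)
    (fun (g : Fin k ↪ {x // x ∈ S}) _ => fun a => (g a : V)) ?_ ?_ ?_ ?_
  · have := (Finset.mem_filter.mp hf).2
    rw [← this]
    exact Finset.mem_image_of_mem f (Finset.mem_univ a)
  · exact hinj f (Finset.mem_filter.mp hf).2 (congrArg Subtype.val hab)
  · intro f hf; exact Finset.mem_univ _
  · intro g hg
    refine Finset.mem_filter.mpr ⟨Finset.mem_univ _, ?_⟩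
    have hsub : (Finset.univ.image fun a => ((g a : V))) ⊆ S := by
      intro v hv
      obtain ⟨a, _, rfl⟩ := Finset.mem_image.mp hv
      exact (g a).2
    have hcard2 : (Finset.univ.image fun a => ((g a : V))).card = S.card := by
      rw [Finset.card_image_of_injective _ (fun a b hab => g.injective (Subtype.val_injective hab)),
        Finset.card_univ, Fintype.card_fin, hS]
    exact Finset.eq_of_subset_of_card_le hsub (le_of_eq hcard2.symm)
  · intro f hf; rfl
  · intro g hg; ext a : 1; rfl

lemma sum_adj_eq {V : Type*} [Fintype V] [DecidableEq V] (r : ℕ) (hr : 2 ≤ r)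
    (E : Finset (Finset V)) (hu : ∀ e ∈ E, e.card = r) (j : V) (x : V → ℂ) :
    ∑ f : Fin (r - 1) → V, adjEntry r E j f * ∏ i, x (f i)
      = ∑ e ∈ E.filter fun e => j ∈ e, ∏ v ∈ e.erase j, x v := by
  have hfac : ((r - 1).factorial : ℂ) ≠ 0 := Nat.cast_ne_zero.mpr (Nat.factorial_ne_zero _)
  rw [← Finset.sum_fiberwise Finset.univ
    (fun f : Fin (r - 1) → V => Finset.image f Finset.univ)
    (fun f => adjEntry r E j f * ∏ i, x (f i))]
  have hstep : ∀ S : Finset V,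
      (∑ f ∈ Finset.univ.filter (fun f : Fin (r-1) → V => Finset.image f Finset.univ = S),
        adjEntry r E j f * ∏ i, x (f i))
      = if j ∉ S ∧ insert j S ∈ E ∧ S.card = r - 1 then ∏ v ∈ S, x v else 0 := by
    intro S
    by_cases hgood : j ∉ S ∧ insert j S ∈ E ∧ S.card = r - 1
    · rw [if_pos hgood]
      obtain ⟨hjS, hSE, hScard⟩ := hgood
      have hterm : ∀ f ∈ Finset.univ.filter
          (fun f : Fin (r-1) → V => Finset.image f Finset.univ = S),
          adjEntry r E j f * ∏ i, x (f i)
            = (1 / ((r - 1).factorial : ℂ)) * ∏ v ∈ S, x v := by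
        intro f hf
        have hfS : Finset.image f Finset.univ = S := (Finset.mem_filter.mp hf).2
        have hinjf : Function.Injective f := by
          have h1 : (Finset.univ.image f).card = (Finset.univ : Finset (Fin (r-1))).card := by
            rw [hfS, hScard, Finset.card_univ, Fintype.card_fin]
          have := Finset.injOn_of_card_image_eq h1
          rw [Finset.coe_univ] at this
          exact fun a b hab => this (Set.mem_univ a) (Set.mem_univ b) hab
        have hcond : Function.Injective f ∧ (∀ i, f i ≠ j) ∧
            insert j (Finset.image f Finset.univ) ∈ E := by
          refine ⟨hinjf, fun i hi =>
            hjS (hfS ▸ (hi ▸ Finset.mem_image_of_mem f (Finset.mem_univ i))),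
            by rw [hfS]; exact hSE⟩
        rw [adjEntry, if_pos hcond]
        congr 1
        rw [← hfS, Finset.prod_image]
        intro a _ b _ hab
        exact hinjf hab
      rw [Finset.sum_congr rfl hterm, Finset.sum_const, card_fiber (r-1) S hScard,
        nsmul_eq_mul]
      rw [← mul_assoc, mul_one_div, div_self hfac, one_mul]
    · rw [if_neg hgood]
      refine Finset.sum_eq_zero fun f hf => ?_
      have hfS : Finset.image f Finset.univ = S := (Finset.mem_filter.mp hf).2
      rw [adjEntry]
      by_cases hcond : Function.Injective f ∧ (∀ i, f i ≠ j) ∧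
          insert j (Finset.image f Finset.univ) ∈ E
      · exfalso
        apply hgood
        obtain ⟨hinjf, havoid, hE⟩ := hcond
        refine ⟨fun hjS => ?_, by rw [← hfS]; exact hE, ?_⟩
        · rw [← hfS] at hjS
          obtain ⟨i, _, hi⟩ := Finset.mem_image.mp hjS
          exact havoid i hi
        · rw [← hfS, Finset.card_image_of_injective _ hinjf, Finset.card_univ,
            Fintype.card_fin]
      · rw [if_neg hcond, zero_mul]
  rw [Finset.sum_congr rfl (fun S _ => hstep S), Finset.sum_ite, Finset.sum_const_zero,
    add_zero]
  refine Finset.sum_nbij' (fun S => insert j S) (fun e => e.erase j) ?_ ?_ ?_ ?_ ?_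
  · intro S hS
    simp only [Finset.mem_filter] at hS ⊢
    exact ⟨hS.2.2.1, Finset.mem_insert_self _ _⟩
  · intro e he
    simp only [Finset.mem_filter] at he ⊢
    obtain ⟨heE, hje⟩ := he
    refine ⟨Finset.mem_univ _, Finset.notMem_erase _ _, ?_, ?_⟩
    · rw [Finset.insert_erase hje]; exact heE
    · rw [Finset.card_erase_of_mem hje, hu e heE]
  · intro S hS
    simp only [Finset.mem_filter] at hS
    exact Finset.erase_insert hS.2.1
  · intro e he
    simp only [Finset.mem_filter] at he
    exact Finset.insert_erase he.2
  · intro S hS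
    simp only [Finset.mem_filter] at hS
    rw [Finset.erase_insert hS.2.1]

section corona
variable (r n₁ n₂ : ℕ) (E₁ : Finset (Finset (Fin n₁))) (E₂ : Finset (Finset (Fin n₂)))

lemma inr_inj (i : Fin n₁) :
    Function.Injective (fun v : Fin n₂ => (Sum.inr (i, v) : Fin n₁ ⊕ Fin n₁ × Fin n₂)) := by
  intro a b h
  simpa using h

lemma corona_card (hr : 2 ≤ r) (hu₁ : ∀ e ∈ E₁, e.card = r) (hu₂ : ∀ e ∈ E₂, e.card = r) :
    ∀ e ∈ coronaEdges r n₁ n₂ E₁ E₂, e.card = r := by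
  intro e he
  simp only [coronaEdges, Finset.mem_union, Finset.mem_image, Finset.mem_product,
    Finset.mem_powersetCard] at he
  rcases he with (⟨a, ha, rfl⟩ | ⟨p, hp, rfl⟩) | ⟨p, hp, rfl⟩
  · rw [Finset.card_map]; exact hu₁ a ha
  · rw [Finset.card_image_of_injective _ (inr_inj n₁ n₂ p.1)]
    exact hu₂ p.2 hp.2
  · rw [Finset.card_insert_of_notMem (by simp),
      Finset.card_image_of_injective _ (inr_inj n₁ n₂ p.1)]
    have := hp.2.2
    omega

lemma corona_split (hr : 2 ≤ r) (hu₁ : ∀ e ∈ E₁, e.card = r) (hu₂ : ∀ e ∈ E₂, e.card = r)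
    (F : Finset (Fin n₁ ⊕ Fin n₁ × Fin n₂) → ℂ) :
    ∑ e ∈ coronaEdges r n₁ n₂ E₁ E₂, F e
      = (∑ e ∈ E₁, F (e.map ⟨Sum.inl, Sum.inl_injective⟩))
        + (∑ p ∈ Finset.univ ×ˢ E₂, F (p.2.image fun v => Sum.inr (p.1, v)))
        + (∑ p ∈ Finset.univ ×ˢ Finset.univ.powersetCard (r - 1),
            F (insert (Sum.inl p.1) (p.2.image fun v => Sum.inr (p.1, v)))) := by
  have hd1 : Disjoint (E₁.image (fun e => e.map ⟨Sum.inl, Sum.inl_injective⟩))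
      ((Finset.univ ×ˢ E₂).image (fun p : Fin n₁ × Finset (Fin n₂) =>
        p.2.image (fun v => Sum.inr (p.1, v)))) := by
    rw [Finset.disjoint_left]
    rintro s hs1 hs2
    obtain ⟨a, ha, rfl⟩ := Finset.mem_image.mp hs1
    obtain ⟨p, hp, hps⟩ := Finset.mem_image.mp hs2
    have hane : a.Nonempty := by
      rw [← Finset.card_pos, hu₁ a ha]; omega
    obtain ⟨v, hv⟩ := hane
    have : (Sum.inl v : Fin n₁ ⊕ Fin n₁ × Fin n₂) ∈ p.2.image (fun v => Sum.inr (p.1, v)) := by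
      rw [hps]
      exact Finset.mem_map_of_mem _ hv
    simp at this
  have hd2 : Disjoint (E₁.image (fun e => e.map ⟨Sum.inl, Sum.inl_injective⟩) ∪
      (Finset.univ ×ˢ E₂).image (fun p : Fin n₁ × Finset (Fin n₂) =>
        p.2.image (fun v => Sum.inr (p.1, v))))
      ((Finset.univ ×ˢ (Finset.univ.powersetCard (r - 1) : Finset (Finset (Fin n₂)))).image
        (fun p : Fin n₁ × Finset (Fin n₂) =>
          insert (Sum.inl p.1) (p.2.image (fun v => Sum.inr (p.1, v))))) := by
    rw [Finset.disjoint_left]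
    rintro s hs1 hs2
    obtain ⟨p, hp, rfl⟩ := Finset.mem_image.mp hs2
    have hpcard : p.2.card = r - 1 :=
      (Finset.mem_powersetCard.mp (Finset.mem_product.mp hp).2).2
    have hpne : p.2.Nonempty := by rw [← Finset.card_pos, hpcard]; omega
    obtain ⟨v, hv⟩ := hpne
    rcases Finset.mem_union.mp hs1 with h | h
    · obtain ⟨a, ha, has⟩ := Finset.mem_image.mp h
      have : (Sum.inr (p.1, v) : Fin n₁ ⊕ Fin n₁ × Fin n₂)
          ∈ a.map ⟨Sum.inl, Sum.inl_injective⟩ := by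
        rw [has]
        exact Finset.mem_insert_of_mem (Finset.mem_image_of_mem _ hv)
      simp at this
    · obtain ⟨q, hq, hqs⟩ := Finset.mem_image.mp h
      have : (Sum.inl p.1 : Fin n₁ ⊕ Fin n₁ × Fin n₂) ∈ q.2.image (fun v => Sum.inr (q.1, v)) := by
        rw [hqs]
        exact Finset.mem_insert_self _ _
      simp at this
  rw [coronaEdges, Finset.sum_union hd2, Finset.sum_union hd1]
  congr 1
  · congr 1
    · rw [Finset.sum_image]
      intro a _ b _ hab
      exact Finset.map_injective _ hab
    · rw [Finset.sum_image]
      rintro p hp q hq hpq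
      simp only at hpq
      have hpne : p.2.Nonempty := by
        rw [← Finset.card_pos, hu₂ p.2 (Finset.mem_product.mp hp).2]; omega
      obtain ⟨v, hv⟩ := hpne
      have hmem : (Sum.inr (p.1, v) : Fin n₁ ⊕ Fin n₁ × Fin n₂) ∈
          q.2.image (fun v => Sum.inr (q.1, v)) := by
        rw [← hpq]; exact Finset.mem_image_of_mem _ hv
      obtain ⟨w, hw, hwv⟩ := Finset.mem_image.mp hmem
      have h1 : q.1 = p.1 := by
        have h := hwv
        simp only [Sum.inr.injEq, Prod.mk.injEq] at h
        exact h.1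
      have h2 : p.2.image (fun v => (Sum.inr (p.1, v) : Fin n₁ ⊕ Fin n₁ × Fin n₂))
          = q.2.image (fun v => Sum.inr (p.1, v)) := by rw [hpq, h1]
      exact Prod.ext h1.symm (Finset.image_injective (inr_inj n₁ n₂ p.1) h2)
  · rw [Finset.sum_image]
    rintro p hp q hq hpq
    simp only at hpq
    have h1 : p.1 = q.1 := by
      have : (Sum.inl p.1 : Fin n₁ ⊕ Fin n₁ × Fin n₂) ∈
          insert (Sum.inl q.1) (q.2.image fun v => Sum.inr (q.1, v)) := by
        rw [← hpq]; exact Finset.mem_insert_self _ _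
      rcases Finset.mem_insert.mp this with h | h
      · exact Sum.inl.inj h
      · simp at h
    obtain ⟨p1, p2⟩ := p
    obtain ⟨q1, q2⟩ := q
    simp only at h1 hpq ⊢
    subst h1
    have h2 : p2.image (fun v => (Sum.inr (p1, v) : Fin n₁ ⊕ Fin n₁ × Fin n₂))
        = q2.image (fun v => Sum.inr (p1, v)) := by
      have h := congrArg (fun s => Finset.erase s (Sum.inl p1)) hpq
      rwa [Finset.erase_insert (by simp), Finset.erase_insert (by simp)] at h
    have h3 : p2 = q2 := Finset.image_injective (inr_inj n₁ n₂ p1) h2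
    rw [h3]

end corona

lemma card_pows_mem {n k : ℕ} (hk : 1 ≤ k) (v : Fin n) :
    ((Finset.univ.powersetCard k).filter fun S : Finset (Fin n) => v ∈ S).card
      = (n - 1).choose (k - 1) := by
  have hcard : ((Finset.univ.erase v).powersetCard (k - 1)).card = (n - 1).choose (k - 1) := by
    rw [Finset.card_powersetCard, Finset.card_erase_of_mem (Finset.mem_univ v),
      Finset.card_univ, Fintype.card_fin]
  rw [← hcard]
  refine Finset.card_bij' (fun S _ => S.erase v) (fun T _ => insert v T) ?_ ?_ ?_ ?_
  · intro S hS
    simp only [Finset.mem_filter, Finset.mem_powersetCard] at hS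
    rw [Finset.mem_powersetCard]
    refine ⟨Finset.erase_subset_erase v hS.1.1, ?_⟩
    rw [Finset.card_erase_of_mem hS.2, hS.1.2]
  · intro T hT
    rw [Finset.mem_powersetCard] at hT
    have hvT : v ∉ T := fun h => Finset.notMem_erase v _ (hT.1 h)
    simp only [Finset.mem_filter, Finset.mem_powersetCard]
    refine ⟨⟨Finset.subset_univ _, ?_⟩, Finset.mem_insert_self _ _⟩
    rw [Finset.card_insert_of_notMem hvT, hT.2]
    omega
  · intro S hS
    simp only [Finset.mem_filter] at hS
    exact Finset.insert_erase hS.2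
  · intro T hT
    rw [Finset.mem_powersetCard] at hT
    exact Finset.erase_insert (fun h => Finset.notMem_erase v _ (hT.1 h))

/-- adjacency eigenvalues of the corona `H₁ ∘ H₂` with `H₂` `d`-regular,
with `C = binom(n₂-1, r-2)`. -/
theorem stmt17 (r n₁ n₂ : ℕ) (hr : 2 ≤ r) (hn₂ : r - 1 ≤ n₂)
    (E₁ : Finset (Finset (Fin n₁))) (E₂ : Finset (Finset (Fin n₂)))
    (hu₁ : ∀ e ∈ E₁, e.card = r) (hu₂ : ∀ e ∈ E₂, e.card = r)
    (d : ℕ) (hreg : ∀ v, hdegree E₂ v = d) :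
    (∀ (lam mu : ℂ) (x : Fin n₁ → ℂ),
        IsEigenpair r (adjEntry r E₁) lam x →
        mu ≠ (d : ℂ) →
        (mu - lam) * (mu - (d : ℂ)) ^ (r - 1) -
          (n₂.choose (r - 1) : ℂ) * ((n₂ - 1).choose (r - 2) : ℂ) ^ (r - 1) = 0 →
        IsEigenpair r (adjEntry r (coronaEdges r n₁ n₂ E₁ E₂)) mu
          (Sum.elim x fun p =>
            ((n₂ - 1).choose (r - 2) : ℂ) * x p.1 / (mu - (d : ℂ)))) ∧
    (∀ (eta : ℂ) (z : Fin n₂ → ℂ),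
        IsEigenpair r (adjEntry r E₂) eta z → IsNonMainVec r z →
        ∀ i : Fin n₁,
          IsEigenpair r (adjEntry r (coronaEdges r n₁ n₂ E₁ E₂)) eta
            (Sum.elim (fun _ : Fin n₁ => (0 : ℂ))
              (fun p => if p.1 = i then z p.2 else 0))) := by
  have hcor : ∀ e ∈ coronaEdges r n₁ n₂ E₁ E₂, e.card = r :=
    corona_card r n₁ n₂ E₁ E₂ hr hu₁ hu₂
  have hrm1 : r - 1 ≠ 0 := by omega
  constructor
  · rintro lam mu x ⟨hx0, hx⟩ hmu heq
    have hmd : mu - (d : ℂ) ≠ 0 := sub_ne_zero.mpr hmu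
    set C : ℂ := ((n₂ - 1).choose (r - 2) : ℂ) with hC
    set y : Fin n₁ ⊕ Fin n₁ × Fin n₂ → ℂ :=
      Sum.elim x (fun p => C * x p.1 / (mu - (d : ℂ))) with hy
    constructor
    · intro h0
      apply hx0
      funext i
      exact congrFun h0 (Sum.inl i)
    · intro j
      rw [sum_adj_eq r hr _ hcor j y, Finset.sum_filter,
        corona_split r n₁ n₂ E₁ E₂ hr hu₁ hu₂]
      rcases j with i | ⟨i, v⟩
      · -- vertex u_i of H₁
        set c : ℂ := C * x i / (mu - (d : ℂ)) with hcdef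
        have s1 : (∑ e ∈ E₁, if (Sum.inl i : Fin n₁ ⊕ Fin n₁ × Fin n₂) ∈
              e.map ⟨Sum.inl, Sum.inl_injective⟩ then
              ∏ w ∈ (e.map ⟨Sum.inl, Sum.inl_injective⟩).erase (Sum.inl i), y w else 0)
            = lam * x i ^ (r - 1) := by
          have h := hx i
          rw [sum_adj_eq r hr E₁ hu₁ i x, Finset.sum_filter] at h
          rw [← h]
          refine Finset.sum_congr rfl fun e he => ?_
          by_cases hie : i ∈ e
          · rw [if_pos (by simpa using hie), if_pos hie,
              show (e.map ⟨Sum.inl, Sum.inl_injective⟩).erase (Sum.inl i)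
                = (e.erase i).map ⟨Sum.inl, Sum.inl_injective⟩ from
                (Finset.map_erase _ e i).symm,
              Finset.prod_map]
            rfl
          · rw [if_neg (by simpa using hie), if_neg hie]
        have s2 : (∑ p ∈ Finset.univ ×ˢ E₂,
            if (Sum.inl i : Fin n₁ ⊕ Fin n₁ × Fin n₂) ∈ p.2.image (fun v => Sum.inr (p.1, v)) then
              ∏ w ∈ (p.2.image fun v => Sum.inr (p.1, v)).erase (Sum.inl i), y w else 0) = 0 := by
          refine Finset.sum_eq_zero fun p _ => ?_
          rw [if_neg (by simp)]
        have s3 : (∑ p ∈ Finset.univ ×ˢ Finset.univ.powersetCard (r - 1),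
            if (Sum.inl i : Fin n₁ ⊕ Fin n₁ × Fin n₂) ∈
                insert (Sum.inl p.1) (p.2.image fun v => Sum.inr (p.1, v)) then
              ∏ w ∈ (insert (Sum.inl p.1) (p.2.image fun v => Sum.inr (p.1, v))).erase
                (Sum.inl i), y w else 0)
            = (n₂.choose (r - 1) : ℂ) * c ^ (r - 1) := by
          rw [Finset.sum_product]
          rw [Finset.sum_eq_single i]
          · have hterm : ∀ S ∈ (Finset.univ.powersetCard (r - 1) : Finset (Finset (Fin n₂))),
                (if (Sum.inl i : Fin n₁ ⊕ Fin n₁ × Fin n₂) ∈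
                    insert (Sum.inl i) (S.image fun v => Sum.inr (i, v)) then
                  ∏ w ∈ (insert (Sum.inl i) (S.image fun v => Sum.inr (i, v))).erase
                    (Sum.inl i), y w else 0)
                  = c ^ (r - 1) := by
              intro S hS
              rw [if_pos (Finset.mem_insert_self _ _), Finset.erase_insert (by simp),
                Finset.prod_image (fun a _ b _ h => inr_inj n₁ n₂ i h)]
              have : ∀ w ∈ S, y (Sum.inr (i, w)) = C * x i / (mu - (d : ℂ)) := by
                intro w _; rfl
              rw [Finset.prod_congr rfl this, Finset.prod_const,
                (Finset.mem_powersetCard.mp hS).2, hcdef]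
            rw [Finset.sum_congr rfl hterm, Finset.sum_const, Finset.card_powersetCard,
              Finset.card_univ, Fintype.card_fin, nsmul_eq_mul]
          · intro b _ hbi
            refine Finset.sum_eq_zero fun S _ => ?_
            rw [if_neg]
            intro h
            rcases Finset.mem_insert.mp h with h | h
            · exact hbi (Sum.inl.inj h).symm
            · simp at h
          · intro h; exact absurd (Finset.mem_univ i) h
        have hcc : (mu - (d : ℂ)) * c = C * x i := by
          rw [hcdef, mul_comm, div_mul_cancel₀ _ hmd]
        rw [s1, s2, s3]
        have hyi : y (Sum.inl i) = x i := rfl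
        rw [hyi]
        have hk : (mu - (d : ℂ)) ^ (r - 1) ≠ 0 := pow_ne_zero _ hmd
        clear_value c
        have hck : (mu - (d : ℂ)) ^ (r - 1) * c ^ (r - 1)
            = C ^ (r - 1) * x i ^ (r - 1) := by
          rw [← mul_pow, hcc, mul_pow]
        apply mul_left_cancel₀ hk
        linear_combination ((n₂.choose (r - 1) : ℂ)) * hck - x i ^ (r - 1) * heq
      · -- vertex (i, v) of i-th copy of H₂
        have hne2 : r - 1 - 1 = r - 2 := by omega
        set c : ℂ := C * x i / (mu - (d : ℂ)) with hc
        have s1 : (∑ e ∈ E₁, if (Sum.inr (i, v) : Fin n₁ ⊕ Fin n₁ × Fin n₂) ∈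
              e.map ⟨Sum.inl, Sum.inl_injective⟩ then
              ∏ w ∈ (e.map ⟨Sum.inl, Sum.inl_injective⟩).erase (Sum.inr (i, v)), y w else 0)
            = 0 := by
          refine Finset.sum_eq_zero fun e _ => ?_
          rw [if_neg (by simp)]
        have s2 : (∑ p ∈ Finset.univ ×ˢ E₂,
            if (Sum.inr (i, v) : Fin n₁ ⊕ Fin n₁ × Fin n₂) ∈
                p.2.image (fun w => Sum.inr (p.1, w)) then
              ∏ w ∈ (p.2.image fun w => Sum.inr (p.1, w)).erase (Sum.inr (i, v)), y w else 0)
            = (d : ℂ) * c ^ (r - 1) := by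
          rw [Finset.sum_product]
          rw [Finset.sum_eq_single i]
          · have hterm : ∀ e ∈ E₂,
                (if (Sum.inr (i, v) : Fin n₁ ⊕ Fin n₁ × Fin n₂) ∈
                    e.image (fun w => Sum.inr (i, w)) then
                  ∏ w ∈ (e.image fun w => Sum.inr (i, w)).erase (Sum.inr (i, v)), y w else 0)
                  = if v ∈ e then c ^ (r - 1) else 0 := by
              intro e he
              by_cases hve : v ∈ e
              · rw [if_pos (by simpa using hve), if_pos hve]
                rw [show ((Sum.inr (i, v) : Fin n₁ ⊕ Fin n₁ × Fin n₂)) =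
                  (fun w => (Sum.inr (i, w) : Fin n₁ ⊕ Fin n₁ × Fin n₂)) v from rfl,
                  ← Finset.image_erase (inr_inj n₁ n₂ i),
                  Finset.prod_image (fun a _ b _ h => inr_inj n₁ n₂ i h)]
                have : ∀ w ∈ e.erase v, y (Sum.inr (i, w)) = c := fun w _ => rfl
                rw [Finset.prod_congr rfl this, Finset.prod_const,
                  Finset.card_erase_of_mem hve, hu₂ e he]
              · rw [if_neg (by simpa using hve), if_neg hve]
            rw [Finset.sum_congr rfl hterm, ← Finset.sum_filter, Finset.sum_const]
            have : (E₂.filter fun e => v ∈ e).card = d := hreg v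
            rw [this, nsmul_eq_mul]
          · intro b _ hbi
            refine Finset.sum_eq_zero fun e _ => ?_
            rw [if_neg]
            intro h
            obtain ⟨w, _, hw⟩ := Finset.mem_image.mp h
            simp only [Sum.inr.injEq, Prod.mk.injEq] at hw
            exact hbi hw.1
          · intro h; exact absurd (Finset.mem_univ i) h
        have s3 : (∑ p ∈ Finset.univ ×ˢ Finset.univ.powersetCard (r - 1),
            if (Sum.inr (i, v) : Fin n₁ ⊕ Fin n₁ × Fin n₂) ∈
                insert (Sum.inl p.1) (p.2.image fun w => Sum.inr (p.1, w)) then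
              ∏ w ∈ (insert (Sum.inl p.1) (p.2.image fun w => Sum.inr (p.1, w))).erase
                (Sum.inr (i, v)), y w else 0)
            = C * (x i * c ^ (r - 2)) := by
          rw [Finset.sum_product]
          rw [Finset.sum_eq_single i]
          · have hterm : ∀ S ∈ (Finset.univ.powersetCard (r - 1) : Finset (Finset (Fin n₂))),
                (if (Sum.inr (i, v) : Fin n₁ ⊕ Fin n₁ × Fin n₂) ∈
                    insert (Sum.inl i) (S.image fun w => Sum.inr (i, w)) then
                  ∏ w ∈ (insert (Sum.inl i) (S.image fun w => Sum.inr (i, w))).erase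
                    (Sum.inr (i, v)), y w else 0)
                  = if v ∈ S then x i * c ^ (r - 2) else 0 := by
              intro S hS
              by_cases hvS : v ∈ S
              · rw [if_pos (Finset.mem_insert_of_mem (by simpa using hvS)), if_pos hvS]
                rw [Finset.erase_insert_of_ne (by simp)]
                rw [show ((Sum.inr (i, v) : Fin n₁ ⊕ Fin n₁ × Fin n₂)) =
                  (fun w => (Sum.inr (i, w) : Fin n₁ ⊕ Fin n₁ × Fin n₂)) v from rfl,
                  ← Finset.image_erase (inr_inj n₁ n₂ i)]
                rw [Finset.prod_insert (by simp),
                  Finset.prod_image (fun a _ b _ h => inr_inj n₁ n₂ i h)]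
                have : ∀ w ∈ S.erase v, y (Sum.inr (i, w)) = c := fun w _ => rfl
                rw [Finset.prod_congr rfl this, Finset.prod_const,
                  Finset.card_erase_of_mem hvS, (Finset.mem_powersetCard.mp hS).2, hne2]
                rfl
              · rw [if_neg, if_neg hvS]
                intro h
                rcases Finset.mem_insert.mp h with h | h
                · exact (Sum.inl_ne_inr h.symm)
                · obtain ⟨w, hw, hww⟩ := Finset.mem_image.mp h
                  simp only [Sum.inr.injEq, Prod.mk.injEq] at hww
                  exact hvS (hww.2 ▸ hw)
            rw [Finset.sum_congr rfl hterm, ← Finset.sum_filter, Finset.sum_const,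
              card_pows_mem (by omega) v, nsmul_eq_mul]
            congr 2
          · intro b _ hbi
            refine Finset.sum_eq_zero fun S _ => ?_
            rw [if_neg]
            intro h
            rcases Finset.mem_insert.mp h with h | h
            · exact Sum.inl_ne_inr h.symm
            · obtain ⟨w, _, hw⟩ := Finset.mem_image.mp h
              simp only [Sum.inr.injEq, Prod.mk.injEq] at hw
              exact hbi hw.1
          · intro h; exact absurd (Finset.mem_univ i) h
        rw [s1, s2, s3]
        have hyv : y (Sum.inr (i, v)) = c := rfl
        rw [hyv]
        have hcc : (mu - (d : ℂ)) * c = C * x i := by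
          rw [hc, mul_comm, div_mul_cancel₀ _ hmd]
        have hp : c ^ (r - 1) = c ^ (r - 2) * c := by
          rw [← pow_succ]
          congr 1
          omega
        clear_value c
        rw [hp]
        linear_combination (-(c ^ (r - 2))) * hcc
  · rintro eta z ⟨hz0, hz⟩ hnm i
    set w : Fin n₁ ⊕ Fin n₁ × Fin n₂ → ℂ :=
      Sum.elim (fun _ : Fin n₁ => (0 : ℂ)) (fun p => if p.1 = i then z p.2 else 0) with hw
    constructor
    · intro h0
      apply hz0
      funext u
      have := congrFun h0 (Sum.inr (i, u))
      simpa [hw] using this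
    · intro j
      rw [sum_adj_eq r hr _ hcor j w, Finset.sum_filter,
        corona_split r n₁ n₂ E₁ E₂ hr hu₁ hu₂]
      rcases j with i' | ⟨i', v⟩
      · -- vertex u_{i'} of H₁
        have s1 : (∑ e ∈ E₁, if (Sum.inl i' : Fin n₁ ⊕ Fin n₁ × Fin n₂) ∈
              e.map ⟨Sum.inl, Sum.inl_injective⟩ then
              ∏ u ∈ (e.map ⟨Sum.inl, Sum.inl_injective⟩).erase (Sum.inl i'), w u else 0)
            = 0 := by
          refine Finset.sum_eq_zero fun e he => ?_
          by_cases hie : i' ∈ e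
          · rw [if_pos (by simpa using hie),
              show (e.map ⟨Sum.inl, Sum.inl_injective⟩).erase (Sum.inl i')
                = (e.erase i').map ⟨Sum.inl, Sum.inl_injective⟩ from
                (Finset.map_erase _ e i').symm,
              Finset.prod_map]
            have hne : (e.erase i').Nonempty := by
              rw [← Finset.card_pos, Finset.card_erase_of_mem hie, hu₁ e he]
              omega
            obtain ⟨a, ha⟩ := hne
            exact Finset.prod_eq_zero ha rfl
          · rw [if_neg (by simpa using hie)]
        have s2 : (∑ p ∈ Finset.univ ×ˢ E₂,
            if (Sum.inl i' : Fin n₁ ⊕ Fin n₁ × Fin n₂) ∈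
                p.2.image (fun v => Sum.inr (p.1, v)) then
              ∏ u ∈ (p.2.image fun v => Sum.inr (p.1, v)).erase (Sum.inl i'), w u else 0)
            = 0 := by
          refine Finset.sum_eq_zero fun p _ => ?_
          rw [if_neg (by simp)]
        have s3 : (∑ p ∈ Finset.univ ×ˢ Finset.univ.powersetCard (r - 1),
            if (Sum.inl i' : Fin n₁ ⊕ Fin n₁ × Fin n₂) ∈
                insert (Sum.inl p.1) (p.2.image fun v => Sum.inr (p.1, v)) then
              ∏ u ∈ (insert (Sum.inl p.1) (p.2.image fun v => Sum.inr (p.1, v))).erase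
                (Sum.inl i'), w u else 0)
            = 0 := by
          rw [Finset.sum_product]
          rw [Finset.sum_eq_single i']
          · by_cases hii : i' = i
            · subst hii
              have hterm : ∀ S ∈ (Finset.univ.powersetCard (r - 1) : Finset (Finset (Fin n₂))),
                  (if (Sum.inl i' : Fin n₁ ⊕ Fin n₁ × Fin n₂) ∈
                      insert (Sum.inl i') (S.image fun v => Sum.inr (i', v)) then
                    ∏ u ∈ (insert (Sum.inl i') (S.image fun v => Sum.inr (i', v))).erase
                      (Sum.inl i'), w u else 0)
                    = ∏ u ∈ S, z u := by
                intro S hS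
                rw [if_pos (Finset.mem_insert_self _ _), Finset.erase_insert (by simp),
                  Finset.prod_image (fun a _ b _ h => inr_inj n₁ n₂ i' h)]
                refine Finset.prod_congr rfl fun u _ => ?_
                simp [hw]
              rw [Finset.sum_congr rfl hterm]
              exact hnm
            · refine Finset.sum_eq_zero fun S hS => ?_
              rw [if_pos (Finset.mem_insert_self _ _), Finset.erase_insert (by simp),
                Finset.prod_image (fun a _ b _ h => inr_inj n₁ n₂ i' h)]
              have hne : S.Nonempty := by
                rw [← Finset.card_pos, (Finset.mem_powersetCard.mp hS).2]
                omega
              obtain ⟨a, ha⟩ := hne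
              refine Finset.prod_eq_zero ha ?_
              simp [hw, hii]
          · intro b _ hbi
            refine Finset.sum_eq_zero fun S _ => ?_
            rw [if_neg]
            intro h
            rcases Finset.mem_insert.mp h with h | h
            · exact hbi (Sum.inl.inj h).symm
            · simp at h
          · intro h; exact absurd (Finset.mem_univ i') h
        rw [s1, s2, s3]
        have : w (Sum.inl i') = 0 := rfl
        rw [this, zero_pow hrm1]
        ring
      · -- vertex (i', v)
        have s1 : (∑ e ∈ E₁, if (Sum.inr (i', v) : Fin n₁ ⊕ Fin n₁ × Fin n₂) ∈
              e.map ⟨Sum.inl, Sum.inl_injective⟩ then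
              ∏ u ∈ (e.map ⟨Sum.inl, Sum.inl_injective⟩).erase (Sum.inr (i', v)), w u else 0)
            = 0 := by
          refine Finset.sum_eq_zero fun e _ => ?_
          rw [if_neg (by simp)]
        have s3 : (∑ p ∈ Finset.univ ×ˢ Finset.univ.powersetCard (r - 1),
            if (Sum.inr (i', v) : Fin n₁ ⊕ Fin n₁ × Fin n₂) ∈
                insert (Sum.inl p.1) (p.2.image fun u => Sum.inr (p.1, u)) then
              ∏ u ∈ (insert (Sum.inl p.1) (p.2.image fun u => Sum.inr (p.1, u))).erase
                (Sum.inr (i', v)), w u else 0)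
            = 0 := by
          refine Finset.sum_eq_zero fun p _ => ?_
          by_cases hcond : (Sum.inr (i', v) : Fin n₁ ⊕ Fin n₁ × Fin n₂) ∈
              insert (Sum.inl p.1) (p.2.image fun u => Sum.inr (p.1, u))
          · rw [if_pos hcond]
            refine Finset.prod_eq_zero (i := (Sum.inl p.1 : Fin n₁ ⊕ Fin n₁ × Fin n₂)) ?_ rfl
            exact Finset.mem_erase.mpr ⟨by simp, Finset.mem_insert_self _ _⟩
          · rw [if_neg hcond]
        have s2 : (∑ p ∈ Finset.univ ×ˢ E₂,
            if (Sum.inr (i', v) : Fin n₁ ⊕ Fin n₁ × Fin n₂) ∈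
                p.2.image (fun u => Sum.inr (p.1, u)) then
              ∏ u ∈ (p.2.image fun u => Sum.inr (p.1, u)).erase (Sum.inr (i', v)), w u else 0)
            = eta * (if i' = i then z v else 0) ^ (r - 1) := by
          rw [Finset.sum_product]
          rw [Finset.sum_eq_single i']
          · have hterm : ∀ e ∈ E₂,
                (if (Sum.inr (i', v) : Fin n₁ ⊕ Fin n₁ × Fin n₂) ∈
                    e.image (fun u => Sum.inr (i', u)) then
                  ∏ u ∈ (e.image fun u => Sum.inr (i', u)).erase (Sum.inr (i', v)), w u else 0)
                  = if v ∈ e then ∏ u ∈ e.erase v, (if i' = i then z u else 0) else 0 := by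
              intro e he
              by_cases hve : v ∈ e
              · rw [if_pos (by simpa using hve), if_pos hve]
                rw [show ((Sum.inr (i', v) : Fin n₁ ⊕ Fin n₁ × Fin n₂)) =
                  (fun u => (Sum.inr (i', u) : Fin n₁ ⊕ Fin n₁ × Fin n₂)) v from rfl,
                  ← Finset.image_erase (inr_inj n₁ n₂ i'),
                  Finset.prod_image (fun a _ b _ h => inr_inj n₁ n₂ i' h)]
                rfl
              · rw [if_neg (by simpa using hve), if_neg hve]
            rw [Finset.sum_congr rfl hterm]
            by_cases hii : i' = i
            · subst hii
              simp only [if_pos rfl]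
              have h := hz v
              rw [sum_adj_eq r hr E₂ hu₂ v z, Finset.sum_filter] at h
              exact h
            · simp only [if_neg hii]
              rw [zero_pow hrm1, mul_zero]
              refine Finset.sum_eq_zero fun e he => ?_
              by_cases hve : v ∈ e
              · rw [if_pos hve]
                have hne : (e.erase v).Nonempty := by
                  rw [← Finset.card_pos, Finset.card_erase_of_mem hve, hu₂ e he]
                  omega
                obtain ⟨a, ha⟩ := hne
                exact Finset.prod_eq_zero ha rfl
              · rw [if_neg hve]
          · intro b _ hbi
            refine Finset.sum_eq_zero fun e _ => ?_
            rw [if_neg]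
            intro h
            obtain ⟨u, _, hu⟩ := Finset.mem_image.mp h
            simp only [Sum.inr.injEq, Prod.mk.injEq] at hu
            exact hbi hu.1
          · intro h; exact absurd (Finset.mem_univ i') h
        rw [s1, s2, s3]
        have : w (Sum.inr (i', v)) = if i' = i then z v else 0 := rfl
        rw [this]
        ring
end
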